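/- Let f : ℂ → ℂ be a Schwartz function and let λ > 0. Then for every z ∈ ℂ one has the pointwise identity (2λ/π) ∫_ℂ exp(2iλ Re((z − w)²)) f(w) dA(w) = (1/(4π²)) ∫_ℂ exp(i Re(z ζ̄)) exp(−i Re(ζ²)/(8λ)) (Ff)(ζ) dA(ζ), where both integrals converge absolutely. -/

import Mathlib

/-!
For `Re c > 0` the Gaussian `conjGaussian c`, i.e. `x + iy ↦ e^{-c x² - c̄ y²}`, has Fourier transform
`(π / |c|) · conjGaussian (4c)⁻¹`, computed one real variable at a time. Fubini then gives
`∫ e^{i Re(z ζ̄)} G_c(ζ) (Ff)(ζ) dA(ζ) = (π / |c|) ∫ G_{(4c)⁻¹}(z - w) f(w) dA(w)`.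
On `{Re c ≥ 0, c ≠ 0}` we have `|G_c| ≤ 1`, so both sides are continuous in `c` there by dominated
convergence (`f` and `Ff` are integrable), and the identity extends from the open half-plane to its
boundary. At `c = i/(8λ)` the two Gaussians are the chirps of the statement:
`G_c(ζ) = e^{-i Re(ζ²)/(8λ)}` and `G_{(4c)⁻¹}(w) = e^{2iλ Re(w²)}`.
-/

open MeasureTheory Complex Filter
open scoped ENNReal

/-- Fourier transform `(Ff)(ζ) = ∫_ℂ e^{-i Re(z ζ̄)} f(z) dA(z)`. -/
noncomputable def fourierT (f : ℂ → ℂ) (ζ : ℂ) : ℂ :=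
  ∫ z, Complex.exp (-Complex.I * (((z * (starRingEnd ℂ) ζ).re : ℝ) : ℂ)) * f z

/-- `(e^{2iλ Re z²} ⋆ f)(z) = ∫_ℂ exp(2iλ Re((z-w)²)) f(w) dA(w)`. -/
noncomputable def phaseConv (lam : ℝ) (f : ℂ → ℂ) (z : ℂ) : ℂ :=
  ∫ w, Complex.exp (2 * Complex.I * (lam : ℂ) * (((z - w) ^ 2).re : ℂ)) * f w

open scoped Real FourierTransform ComplexConjugate SchwartzMap

noncomputable def conjGaussian (c w : ℂ) : ℂ :=
  cexp (-(c * (w.re : ℂ) ^ 2 + conj c * (w.im : ℂ) ^ 2))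

lemma norm_conjGaussian (c w : ℂ) : ‖conjGaussian c w‖ = Real.exp (-(c.re * ‖w‖ ^ 2)) := by
  rw [conjGaussian, norm_exp, Complex.sq_norm, normSq_apply]
  congr 1
  simp only [neg_re, add_re, ← ofReal_pow, re_mul_ofReal, conj_re]
  ring

lemma norm_conjGaussian_le_one {c : ℂ} (hc : 0 ≤ c.re) (w : ℂ) : ‖conjGaussian c w‖ ≤ 1 := by
  rw [norm_conjGaussian, Real.exp_le_one_iff, neg_nonpos]
  positivity

lemma continuous_conjGaussian : Continuous fun p : ℂ × ℂ => conjGaussian p.1 p.2 := by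
  unfold conjGaussian; fun_prop

lemma integrable_conjGaussian {c : ℂ} (hc : 0 < c.re) : Integrable (conjGaussian c) := by
  refine (GaussianFourier.integrable_cexp_neg_mul_sq_norm_add (b := c.re) (by simpa) 0 0).mono
    (continuous_conjGaussian.comp (Continuous.prodMk_right c)).aestronglyMeasurable
    (Eventually.of_forall fun w => ?_)
  rw [norm_conjGaussian, norm_exp]
  simp [← ofReal_pow]

lemma cpow_one_half_mul_conj_cpow_one_half {w : ℂ} (hw : w.arg ≠ π) :
    w ^ (1 / 2 : ℂ) * conj w ^ (1 / 2 : ℂ) = ‖w‖ := by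
  have h : (1 / 2 : ℂ) = ((1 / 2 : ℝ) : ℂ) := by norm_num
  rw [conj_cpow _ _ hw, h, conj_ofReal, mul_conj, ← Complex.sq_norm, norm_cpow_real,
    ← Real.rpow_natCast, ← Real.rpow_mul (norm_nonneg w)]
  norm_num

lemma integral_exp_re_mul_conj_mul_conjGaussian {c : ℂ} (hc : 0 < c.re) (u : ℂ) :
    ∫ ζ, cexp (I * (u * conj ζ).re) * conjGaussian c ζ
      = ((π / ‖c‖ : ℝ) : ℂ) * conjGaussian (4 * c)⁻¹ u := by
  have hc' : 0 < (conj c).re := by rwa [conj_re]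
  have hsplit : ∀ p : ℝ × ℝ,
      cexp (I * (u * conj (measurableEquivRealProd.symm p)).re) *
          conjGaussian c (measurableEquivRealProd.symm p)
        = (cexp (I * u.re * p.1) * cexp (-c * p.1 ^ 2)) *
          (cexp (I * u.im * p.2) * cexp (-conj c * p.2 ^ 2)) := by
    intro p
    simp only [conjGaussian, measurableEquivRealProd_symm_apply, ← Complex.exp_add]
    congr 1
    simp only [mul_re, conj_re, conj_im]
    push_cast
    ring
  rw [← volume_preserving_equiv_real_prod.symm.integral_comp
    measurableEquivRealProd.symm.measurableEmbedding]
  simp_rw [hsplit]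
  rw [Measure.volume_eq_prod,
    integral_prod_mul (fun x : ℝ => cexp (I * u.re * x) * cexp (-c * x ^ 2))
      (fun y : ℝ => cexp (I * u.im * y) * cexp (-conj c * y ^ 2)),
    fourierIntegral_gaussian hc,
    fourierIntegral_gaussian hc', mul_mul_mul_comm,
    show (π : ℂ) / conj c = conj (π / c) by rw [map_div₀, conj_ofReal]]
  have harg : ((π : ℂ) / c).arg ≠ π := by
    rw [Ne, arg_eq_pi_iff, not_and_or, not_lt]
    left
    simp only [div_re, ofReal_re, ofReal_im, zero_mul, zero_div, add_zero]
    exact div_nonneg (mul_nonneg Real.pi_pos.le hc.le) (normSq_nonneg c)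
  rw [cpow_one_half_mul_conj_cpow_one_half harg, conjGaussian, ← Complex.exp_add]
  congr 1
  · simp [abs_of_pos Real.pi_pos]
  · congr 1
    simp only [map_inv₀, map_mul, map_ofNat]
    field_simp
    ring

section
variable {g : ℂ → ℂ} {φ : ℂ → ℂ}

lemma MeasureTheory.Integrable.conjGaussian_comp_mul (hg : Integrable g) (hφ : Continuous φ) {c : ℂ}
    (hc : 0 ≤ c.re) : Integrable fun w => conjGaussian c (φ w) * g w :=
  hg.bdd_mul (continuous_conjGaussian.comp (continuous_const.prodMk hφ)).aestronglyMeasurable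
    (Eventually.of_forall fun w => norm_conjGaussian_le_one hc (φ w))

lemma continuousOn_integral_conjGaussian_comp_mul (hg : Integrable g) (hφ : Continuous φ) :
    ContinuousOn (fun c => ∫ w, conjGaussian c (φ w) * g w) {c | 0 ≤ c.re} := by
  refine continuousOn_of_dominated (bound := fun w => ‖g w‖)
    (fun c hc => (hg.conjGaussian_comp_mul hφ hc).aestronglyMeasurable)
    (fun c hc => Eventually.of_forall fun w => ?_) hg.norm
    (Eventually.of_forall fun w => ?_)
  · rw [norm_mul]
    exact mul_le_of_le_one_left (norm_nonneg _) (norm_conjGaussian_le_one hc (φ w))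
  · exact ((continuous_conjGaussian.comp (continuous_id.prodMk continuous_const)).mul
      continuous_const).continuousOn

end

lemma integral_exp_re_mul_conj_mul_conjGaussian_mul_fourierT {f : ℂ → ℂ} (hf : Integrable f)
    {c : ℂ} (hc : 0 < c.re) (z : ℂ) :
    ∫ ζ, cexp (I * (z * conj ζ).re) * conjGaussian c ζ * fourierT f ζ
      = ((π / ‖c‖ : ℝ) : ℂ) * ∫ w, conjGaussian (4 * c)⁻¹ (z - w) * f w := by
  set Φ : ℂ → ℂ → ℂ := fun ζ w => cexp (I * ((z - w) * conj ζ).re) * conjGaussian c ζ * f w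
  have hΦ : Integrable (Function.uncurry Φ) (volume.prod volume) := by
    refine ((integrable_conjGaussian hc).norm.mul_prod hf.norm).mono' ?_
      (Eventually.of_forall fun q => ?_)
    · exact (Continuous.aestronglyMeasurable (by unfold conjGaussian; fun_prop)).mul
        hf.1.comp_snd
    · simp only [Function.uncurry, Φ, norm_mul, norm_exp_I_mul_ofReal, one_mul, le_refl]
  calc ∫ ζ, cexp (I * (z * conj ζ).re) * conjGaussian c ζ * fourierT f ζ
      = ∫ ζ, ∫ w, Φ ζ w := by
        congr 1; ext ζ
        rw [fourierT, ← integral_const_mul]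
        congr 1; ext w
        dsimp only [Φ]
        rw [sub_mul, sub_re, ofReal_sub, mul_sub, sub_eq_add_neg,
          Complex.exp_add, ← neg_mul]
        ring
    _ = ∫ w, ∫ ζ, Φ ζ w := integral_integral_swap hΦ
    _ = ∫ w, ((π / ‖c‖ : ℝ) : ℂ) * (conjGaussian (4 * c)⁻¹ (z - w) * f w) := by
        congr 1; ext w
        rw [integral_mul_const, integral_exp_re_mul_conj_mul_conjGaussian hc, mul_assoc]
    _ = _ := integral_const_mul _ _

lemma fourierT_eq_fourier (f : ℂ → ℂ) (ζ : ℂ) : fourierT f ζ = 𝓕 f ((2 * π)⁻¹ • ζ) := by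
  rw [Real.fourier_eq', fourierT]
  congr 1; ext v
  rw [real_inner_smul_right, Complex.inner, smul_eq_mul]
  congr 2
  simp only [mul_re, conj_re, conj_im]
  push_cast
  field_simp

lemma integrable_fourierT (f : 𝓢(ℂ, ℂ)) : Integrable (fourierT f) := by
  rw [funext (fourierT_eq_fourier f), ← SchwartzMap.fourier_coe]
  exact (𝓕 f).integrable.comp_smul (by positivity)

lemma MeasureTheory.Integrable.exp_re_mul_conj_mul {g : ℂ → ℂ} (hg : Integrable g) (z : ℂ) :
    Integrable fun ζ => cexp (I * (z * conj ζ).re) * g ζ :=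
  hg.bdd_mul (Continuous.aestronglyMeasurable (by fun_prop))
    (Eventually.of_forall fun ζ => (norm_exp_I_mul_ofReal _).le)

lemma re_inv_four_mul_nonneg {c : ℂ} (hc : 0 ≤ c.re) : 0 ≤ ((4 * c)⁻¹).re := by
  rw [inv_re]
  exact div_nonneg (by simpa using hc) (normSq_nonneg _)

lemma integral_exp_re_mul_conj_mul_conjGaussian_mul_fourierT_of_re_nonneg {f : ℂ → ℂ}
    (hf : Integrable f) (hFf : Integrable (fourierT f)) {c : ℂ} (hc : 0 ≤ c.re) (hc0 : c ≠ 0)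
    (z : ℂ) :
    ∫ ζ, cexp (I * (z * conj ζ).re) * conjGaussian c ζ * fourierT f ζ
      = ((π / ‖c‖ : ℝ) : ℂ) * ∫ w, conjGaussian (4 * c)⁻¹ (z - w) * f w := by
  set t : Set ℂ := {c | 0 ≤ c.re} ∩ {0}ᶜ
  have hLHS : ContinuousOn
      (fun c => ∫ ζ, cexp (I * (z * conj ζ).re) * conjGaussian c ζ * fourierT f ζ) t := by
    simp_rw [mul_comm (cexp _), mul_assoc]
    exact (continuousOn_integral_conjGaussian_comp_mul (hFf.exp_re_mul_conj_mul z)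
      continuous_id).mono Set.inter_subset_left
  have hRHS : ContinuousOn
      (fun c => ((π / ‖c‖ : ℝ) : ℂ) * ∫ w, conjGaussian (4 * c)⁻¹ (z - w) * f w) t := by
    refine ContinuousOn.mul ?_ ((continuousOn_integral_conjGaussian_comp_mul hf
      (continuous_const.sub continuous_id)).comp ?_ fun c hc => re_inv_four_mul_nonneg hc.1)
    · exact continuous_ofReal.comp_continuousOn
        (continuousOn_const.div continuous_norm.continuousOn fun c hc => norm_ne_zero_iff.2 hc.2)
    · exact (continuousOn_const.mul continuousOn_id).inv₀
        fun c hc => mul_ne_zero (by norm_num) hc.2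
  refine Set.EqOn.of_subset_closure (s := {c : ℂ | 0 < c.re})
    (fun c hc => integral_exp_re_mul_conj_mul_conjGaussian_mul_fourierT hf hc z) hLHS hRHS
    (fun c hc => ⟨(show 0 < c.re from hc).le, fun h => ?_⟩) ?_ ⟨hc, hc0⟩
  · simp [Set.mem_singleton_iff.1 h] at hc
  · rw [closure_setOfPred_lt_re]
    exact Set.inter_subset_left

lemma conjGaussian_ofReal_mul_I (a : ℝ) (w : ℂ) :
    conjGaussian (a * I) w = cexp (-(a * I) * (w ^ 2).re) := by
  have hre : (w ^ 2).re = w.re ^ 2 - w.im ^ 2 := by rw [sq, mul_re]; ring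
  rw [conjGaussian, map_mul, conj_ofReal, conj_I, hre]
  push_cast
  ring_nf

theorem stmt_12 (f : SchwartzMap ℂ ℂ) (lam : ℝ) (hlam : 0 < lam) (z : ℂ) :
    Integrable (fun w =>
        Complex.exp (2 * Complex.I * (lam : ℂ) * (((z - w) ^ 2).re : ℂ)) * f w) volume ∧
    Integrable (fun ζ =>
        Complex.exp (Complex.I * (((z * (starRingEnd ℂ) ζ).re : ℝ) : ℂ)) *
          Complex.exp (-Complex.I * (((ζ ^ 2).re : ℝ) : ℂ) / (8 * (lam : ℂ))) *
          fourierT (⇑f) ζ) volume ∧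
    ((2 * lam / Real.pi : ℝ) : ℂ) * phaseConv lam (⇑f) z
      = ((1 / (4 * Real.pi ^ 2) : ℝ) : ℂ) *
          ∫ ζ, Complex.exp (Complex.I * (((z * (starRingEnd ℂ) ζ).re : ℝ) : ℂ)) *
            Complex.exp (-Complex.I * (((ζ ^ 2).re : ℝ) : ℂ) / (8 * (lam : ℂ))) *
            fourierT (⇑f) ζ := by
  set c : ℂ := ((8 * lam)⁻¹ : ℝ) * I with hc_def
  have hc : 0 ≤ c.re := by simp [c]
  have hc0 : c ≠ 0 := by simp [c, hlam.ne']
  have hc_norm : ‖c‖ = (8 * lam)⁻¹ := by simp [c, hlam.le]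
  have hc_inv : (4 * c)⁻¹ = ((-(2 * lam) : ℝ) : ℂ) * I := by
    rw [hc_def, mul_inv, mul_inv, inv_I]
    push_cast
    field_simp
    ring
  have hchirp : ∀ w, cexp (2 * I * lam * ((z - w) ^ 2).re) = conjGaussian (4 * c)⁻¹ (z - w) := by
    intro w
    rw [hc_inv, conjGaussian_ofReal_mul_I]
    push_cast; ring_nf
  have hchirp' : ∀ ζ, cexp (-I * (ζ ^ 2).re / (8 * lam)) = conjGaussian c ζ := by
    intro ζ
    rw [conjGaussian_ofReal_mul_I]
    push_cast; ring_nf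
  simp only [phaseConv, hchirp, hchirp']
  refine ⟨(f.integrable.conjGaussian_comp_mul (continuous_const.sub continuous_id)
    (re_inv_four_mul_nonneg hc)), ?_, ?_⟩
  · simpa only [mul_comm (cexp _), mul_assoc] using
      ((integrable_fourierT f).exp_re_mul_conj_mul z).conjGaussian_comp_mul continuous_id' hc
  · rw [integral_exp_re_mul_conj_mul_conjGaussian_mul_fourierT_of_re_nonneg f.integrable
      (integrable_fourierT f) hc hc0, hc_norm]
    push_cast
    field_simp
    ring
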